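/- Let k ≥ 1, q ∈ ℚ and n ≥ 1. Let M⁻ₙ(q) be the n×n Hessenberg matrix over ℚ[t₁,…,t_k] with entries (M⁻ₙ)_{i,j} = (1/i)·((i−j+1)q + (j−1))·t_{i−j+1} for 1 ≤ j ≤ i (in particular (M⁻ₙ)_{i,1} = q·t_i), (M⁻ₙ)_{i,i+1} = −1, and all other entries 0. Then det M⁻ₙ(q) = F^q_{k,n}. -/
import Mathlib


open Finset MvPolynomial

/-- The set of partitions `α ⊢ n` with parts at most `k`, encoded as tuples
`α = (α₁, …, α_k) ∈ ℕ^k` (0-indexed) with `∑ j, (j+1)·α_j = n`. -/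
def partitions (k n : ℕ) : Finset (Fin k → ℕ) :=
  (Fintype.piFinset fun _ : Fin k => Finset.range (n + 1)).filter
    fun α => ∑ j : Fin k, (j.1 + 1) * α j = n

/-- The variable `t_{m+1}` of `ℚ[t₁,…,t_k]` (0-indexed), with the convention
`t_j = 0` for `j > k`. -/
noncomputable def tQ (k m : ℕ) : MvPolynomial (Fin k) ℚ :=
  if h : m < k then X ⟨m, h⟩ else 0

/-- The Stirling operator of the first kind: `B q m = q(q+1)⋯(q+m-1)`, i.e.
`B q m = B_{m-1}(q)` in the paper's notation, with `B q 0 = B_{-1}(q) = 1`. -/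
def B (q : ℚ) (m : ℕ) : ℚ := ∏ i ∈ Finset.range m, (q + i)

/-- The `q`-th convolution root of the generalized Fibonacci polynomial:
`F^q_{k,n} = ∑_{α ⊢ n} (B_{|α|-1}(q) / (α₁!⋯α_k!)) · t^α`, with `F^q_{k,0} = 1`. -/
noncomputable def Fq (k : ℕ) (q : ℚ) (n : ℕ) : MvPolynomial (Fin k) ℚ :=
  if n = 0 then 1 else
    ∑ α ∈ partitions k n,
      C (B q (∑ j, α j) / ∏ j, ((α j).factorial : ℚ)) * ∏ j, X j ^ α j

/-- The `n×n` Hessenberg matrix `M⁻ₙ(q)` (0-indexed): for 1-based indices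
`i, j` with `j ≤ i` the entry is `(1/i)·((i-j+1)q + (j-1))·t_{i-j+1}`,
the superdiagonal entries are `-1`, and all other entries are `0`. -/
noncomputable def Mminus (k n : ℕ) (q : ℚ) : Matrix (Fin n) (Fin n) (MvPolynomial (Fin k) ℚ) :=
  fun i j =>
    if j.1 ≤ i.1 then
      C ((((i.1 - j.1 + 1 : ℕ) : ℚ) * q + (j.1 : ℚ)) / ((i.1 : ℚ) + 1)) * tQ k (i.1 - j.1)
    else if j.1 = i.1 + 1 then -1
    else 0

lemma mem_partitions' {k n : ℕ} {α : Fin k → ℕ} :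
    α ∈ partitions k n ↔ ∑ j : Fin k, (j.1 + 1) * α j = n := by
  constructor
  · exact fun h => (Finset.mem_filter.mp h).2
  · intro h
    refine Finset.mem_filter.mpr ⟨Fintype.mem_piFinset.mpr fun j => Finset.mem_range.mpr ?_, h⟩
    have h1 : (j.1 + 1) * α j ≤ n := h ▸
      Finset.single_le_sum (f := fun j : Fin k => (j.1 + 1) * α j)
        (fun _ _ => Nat.zero_le _) (Finset.mem_univ j)
    nlinarith [α j]

lemma B_succ (q : ℚ) (m : ℕ) : B q (m + 1) = B q m * (q + m) :=
  Finset.prod_range_succ _ _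

lemma Fq_eq_sum (k : ℕ) (q : ℚ) (n : ℕ) :
    Fq k q n = ∑ α ∈ partitions k n,
      C (B q (∑ j, α j) / ∏ j, ((α j).factorial : ℚ)) * ∏ j, X j ^ α j := by
  rw [Fq]
  split_ifs with h
  · subst h
    have hp : partitions k 0 = {fun _ => 0} := by
      ext α
      simp only [mem_partitions', Finset.mem_singleton]
      constructor
      · intro hs
        funext j
        have := (Finset.sum_eq_zero_iff.mp hs) j (Finset.mem_univ j)
        rcases Nat.mul_eq_zero.mp this with h | h
        · omega
        · exact h
      · intro h; subst h; simp
    simp [hp, B]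
  · rfl

lemma sum_update_eq' {M : Type*} [AddCommMonoid M] {k : ℕ} (β : Fin k → ℕ) (m : Fin k) (v : ℕ)
    (f : Fin k → ℕ → M) :
    ∑ j, f j (Function.update β m v j) =
      f m v + ∑ j ∈ Finset.univ.erase m, f j (β j) := by
  rw [← Finset.add_sum_erase _ (fun j => f j (Function.update β m v j)) (Finset.mem_univ m),
    Function.update_self]
  exact congrArg _ (Finset.sum_congr rfl fun j hj => by
    rw [Function.update_of_ne (Finset.mem_erase.mp hj).1])

lemma prod_update_eq' {M : Type*} [CommMonoid M] {k : ℕ} (β : Fin k → ℕ) (m : Fin k) (v : ℕ)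
    (f : Fin k → ℕ → M) :
    ∏ j, f j (Function.update β m v j) =
      f m v * ∏ j ∈ Finset.univ.erase m, f j (β j) := by
  rw [← Finset.mul_prod_erase _ (fun j => f j (Function.update β m v j)) (Finset.mem_univ m),
    Function.update_self]
  exact congrArg _ (Finset.prod_congr rfl fun j hj => by
    rw [Function.update_of_ne (Finset.mem_erase.mp hj).1])

lemma inner_sum' {k : ℕ} (n : ℕ) (q : ℚ) (α : Fin k → ℕ)
    (hα : ∑ j : Fin k, (j.1 + 1) * α j = n + 1) :
    ∑ m : Fin k, ((((m.1 + 1 : ℕ) : ℚ)) * q + ((n - m.1 : ℕ) : ℚ)) *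
        (B q ((∑ j, α j) - 1) * (α m : ℚ))
      = ((n : ℚ) + 1) * B q (∑ j, α j) := by
  have hS0 : (∑ j, α j) ≠ 0 := by
    intro h
    have h' : ∀ j ∈ Finset.univ, α j = 0 := fun j hj => Finset.sum_eq_zero_iff.mp h j hj
    have : ∑ j : Fin k, (j.1 + 1) * α j = 0 :=
      Finset.sum_eq_zero fun j hj => by rw [h' j hj, Nat.mul_zero]
    omega
  obtain ⟨s, hs⟩ := Nat.exists_eq_succ_of_ne_zero hS0
  have step1 : ∀ m : Fin k, ((((m.1 + 1 : ℕ) : ℚ)) * q + ((n - m.1 : ℕ) : ℚ)) *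
        (B q ((∑ j, α j) - 1) * (α m : ℚ))
      = B q s * ((q - 1) * (((m.1 + 1) * α m : ℕ) : ℚ) + ((n : ℚ) + 1) * (α m : ℚ)) := by
    intro m
    rcases Nat.eq_zero_or_pos (α m) with h0 | h0
    · simp [h0]
    · have hmn : m.1 ≤ n := by
        have h1 : (m.1 + 1) * α m ≤ n + 1 := hα ▸
          Finset.single_le_sum (f := fun j : Fin k => (j.1 + 1) * α j)
            (fun _ _ => Nat.zero_le _) (Finset.mem_univ m)
        nlinarith
      rw [hs, Nat.succ_sub_one, Nat.cast_sub hmn]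
      push_cast
      ring
  rw [Finset.sum_congr rfl fun m _ => step1 m, ← Finset.mul_sum]
  have hc1 : ∑ m : Fin k, (((m.1 + 1) * α m : ℕ) : ℚ) = (n : ℚ) + 1 := by
    rw [← Nat.cast_sum]
    exact_mod_cast congrArg (Nat.cast : ℕ → ℚ) hα
  have hc2 : ∑ m : Fin k, (α m : ℚ) = ((s : ℚ) + 1) := by
    rw [← Nat.cast_sum]
    exact_mod_cast congrArg (Nat.cast : ℕ → ℚ) hs
  rw [Finset.sum_add_distrib, ← Finset.mul_sum, ← Finset.mul_sum, hc1, hc2, hs, B_succ]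
  ring

lemma sum_weight_update_succ {k : ℕ} (β : Fin k → ℕ) (m : Fin k) :
    ∑ i : Fin k, (i.1 + 1) * Function.update β m (β m + 1) i
      = (∑ i : Fin k, (i.1 + 1) * β i) + (m.1 + 1) := by
  rw [← Finset.add_sum_erase _ (fun i => (i.1 + 1) * Function.update β m (β m + 1) i)
      (Finset.mem_univ m),
    ← Finset.add_sum_erase _ (fun i => (i.1 + 1) * β i) (Finset.mem_univ m)]
  have h1 : ∑ i ∈ Finset.univ.erase m, (i.1 + 1) * Function.update β m (β m + 1) i
      = ∑ i ∈ Finset.univ.erase m, (i.1 + 1) * β i :=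
    Finset.sum_congr rfl fun i hi => by rw [Function.update_of_ne (Finset.mem_erase.mp hi).1]
  rw [h1, Function.update_self, Nat.mul_succ]
  omega

lemma sum_weight_update_pred {k : ℕ} (β : Fin k → ℕ) (m : Fin k) (h : β m ≠ 0) :
    (∑ i : Fin k, (i.1 + 1) * Function.update β m (β m - 1) i) + (m.1 + 1)
      = ∑ i : Fin k, (i.1 + 1) * β i := by
  rw [← Finset.add_sum_erase _ (fun i => (i.1 + 1) * Function.update β m (β m - 1) i)
      (Finset.mem_univ m),
    ← Finset.add_sum_erase _ (fun i => (i.1 + 1) * β i) (Finset.mem_univ m)]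
  have h1 : ∑ i ∈ Finset.univ.erase m, (i.1 + 1) * Function.update β m (β m - 1) i
      = ∑ i ∈ Finset.univ.erase m, (i.1 + 1) * β i :=
    Finset.sum_congr rfl fun i hi => by rw [Function.update_of_ne (Finset.mem_erase.mp hi).1]
  rw [h1, Function.update_self]
  obtain ⟨t, ht⟩ := Nat.exists_eq_succ_of_ne_zero h
  rw [ht, Nat.succ_sub_one, Nat.mul_succ]
  omega

lemma update_succ_inj {k : ℕ} {β₁ β₂ : Fin k → ℕ} (m : Fin k)
    (h : Function.update β₁ m (β₁ m + 1) = Function.update β₂ m (β₂ m + 1)) : β₁ = β₂ := by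
  funext i
  rcases eq_or_ne i m with rfl | hi
  · have h' := congrFun h i
    rw [Function.update_self, Function.update_self] at h'
    omega
  · have h' := congrFun h i
    rwa [Function.update_of_ne hi, Function.update_of_ne hi] at h'

lemma tQ_lt_of_ne_zero {k m : ℕ} (h : tQ k m ≠ 0) : m < k := by
  by_contra hm
  exact h (by rw [tQ, dif_neg hm])

lemma Fq_rec_scaled (k n : ℕ) (q : ℚ) :
    (C ((n : ℚ) + 1) : MvPolynomial (Fin k) ℚ) * Fq k q (n + 1) =
      ∑ j : Fin (n + 1),
        C (((n - j.1 + 1 : ℕ) : ℚ) * q + (j.1 : ℚ)) * tQ k (n - j.1) * Fq k q j.1 := by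
  classical
  set f : (Σ _ : Fin (n + 1), Fin k → ℕ) → MvPolynomial (Fin k) ℚ := fun p =>
    C (((n - p.1.1 + 1 : ℕ) : ℚ) * q + (p.1.1 : ℚ)) * tQ k (n - p.1.1) *
      (C (B q (∑ i, p.2 i) / ∏ i, ((p.2 i).factorial : ℚ)) * ∏ i, X i ^ p.2 i) with hf
  set g : (Σ _ : Fin k → ℕ, Fin k) → MvPolynomial (Fin k) ℚ := fun p =>
    C ((((p.2.1 + 1 : ℕ) : ℚ)) * q + ((n - p.2.1 : ℕ) : ℚ)) *
      (C (B q ((∑ i, p.1 i) - 1) * (p.1 p.2 : ℚ) / ∏ i, ((p.1 i).factorial : ℚ)) *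
        ∏ i, X i ^ p.1 i) with hg
  -- the value equation
  have hval : ∀ (j : Fin (n + 1)) (β : Fin k → ℕ), β ∈ partitions k j.1 →
      ∀ (hq : n - j.1 < k),
      f ⟨j, β⟩ = g ⟨Function.update β ⟨n - j.1, hq⟩ (β ⟨n - j.1, hq⟩ + 1), ⟨n - j.1, hq⟩⟩ := by
    intro j β hβ hq
    set m : Fin k := ⟨n - j.1, hq⟩ with hm
    set α : Fin k → ℕ := Function.update β m (β m + 1) with hα
    have hjn : j.1 ≤ n := Nat.lt_succ_iff.mp j.isLt
    have h1 : (∑ i, α i) = (∑ i, β i) + 1 := by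
      rw [hα, sum_update_eq' β m _ (fun _ v => v),
        ← Finset.add_sum_erase _ β (Finset.mem_univ m)]
      omega
    have h2 : α m = β m + 1 := Function.update_self _ _ _
    have h3 : (∏ i, ((α i).factorial : ℚ)) =
        ((β m : ℚ) + 1) * ∏ i, ((β i).factorial : ℚ) := by
      rw [hα, prod_update_eq' β m _ (fun _ v => ((v.factorial : ℚ))),
        ← Finset.mul_prod_erase _ (fun i => ((β i).factorial : ℚ)) (Finset.mem_univ m),
        Nat.factorial_succ]
      push_cast
      ring
    have h4 : (∏ i, (X i : MvPolynomial (Fin k) ℚ) ^ α i) = X m * ∏ i, X i ^ β i := by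
      rw [hα, prod_update_eq' β m _ (fun i v => (X i : MvPolynomial (Fin k) ℚ) ^ v),
        ← Finset.mul_prod_erase _ (fun i => (X i : MvPolynomial (Fin k) ℚ) ^ β i)
          (Finset.mem_univ m), pow_succ]
      ring
    have h5 : tQ k (n - j.1) = X m := by rw [tQ, dif_pos hq]
    have h6 : ((n - m.1 : ℕ) : ℚ) = (j.1 : ℚ) := by
      have : n - m.1 = j.1 := by simp only [hm]; omega
      rw [this]
    have h7 : ((m.1 + 1 : ℕ) : ℚ) = ((n - j.1 + 1 : ℕ) : ℚ) := rfl
    simp only [hf, hg, h1, h2, h3, h4, h5, h6, h7, Nat.add_sub_cancel]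
    have h8 : B q (∑ i, β i) * ((β m + 1 : ℕ) : ℚ) / (((β m : ℚ) + 1) * ∏ i, ((β i).factorial : ℚ))
        = B q (∑ i, β i) / ∏ i, ((β i).factorial : ℚ) := by
      have hne : ((β m : ℚ) + 1) ≠ 0 := by positivity
      push_cast
      rw [mul_comm ((β m : ℚ) + 1)]
      exact mul_div_mul_right _ _ hne
    rw [h8]
    ring
  have hlt : ∀ (p : Σ _ : Fin (n + 1), Fin k → ℕ), f p ≠ 0 → n - p.1.1 < k := by
    intro p h
    refine tQ_lt_of_ne_zero (fun h0 => h ?_)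
    simp only [hf, h0, mul_zero, zero_mul]
  have main : ∑ p ∈ ((Finset.univ : Finset (Fin (n + 1))).sigma fun j => partitions k j.1), f p
      = ∑ p ∈ ((partitions k (n + 1)).sigma fun _ => (Finset.univ : Finset (Fin k))), g p := by
    refine Finset.sum_bij_ne_zero
      (fun p hp hne => ⟨Function.update p.2 ⟨n - p.1.1, hlt p hne⟩ (p.2 ⟨n - p.1.1, hlt p hne⟩ + 1),
        ⟨n - p.1.1, hlt p hne⟩⟩) ?_ ?_ ?_ ?_
    · -- membership
      rintro ⟨j, β⟩ hp hne
      have hβ : ∑ i, (i.1 + 1) * β i = j.1 := mem_partitions'.mp ((Finset.mem_sigma.mp hp).2)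
      refine Finset.mem_sigma.mpr ⟨mem_partitions'.mpr ?_, Finset.mem_univ _⟩
      dsimp only
      rw [sum_weight_update_succ]
      dsimp only
      have hjn : j.1 ≤ n := Nat.lt_succ_iff.mp j.isLt
      omega
    · -- injectivity
      rintro ⟨j₁, β₁⟩ h₁ h₁' ⟨j₂, β₂⟩ h₂ h₂' heq
      have hmval : n - j₁.1 = n - j₂.1 :=
        congrArg (fun p : Σ _ : Fin k → ℕ, Fin k => p.2.1) heq
      have hj : j₁ = j₂ := by
        have hj₁ : j₁.1 ≤ n := Nat.lt_succ_iff.mp j₁.isLt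
        have hj₂ : j₂.1 ≤ n := Nat.lt_succ_iff.mp j₂.isLt
        exact Fin.ext (by omega)
      subst hj
      have hupd : Function.update β₁ ⟨n - j₁.1, hlt ⟨j₁, β₁⟩ h₁'⟩
            (β₁ ⟨n - j₁.1, hlt ⟨j₁, β₁⟩ h₁'⟩ + 1)
          = Function.update β₂ ⟨n - j₁.1, hlt ⟨j₁, β₁⟩ h₁'⟩
            (β₂ ⟨n - j₁.1, hlt ⟨j₁, β₁⟩ h₁'⟩ + 1) :=
        congrArg (fun p : Σ _ : Fin k → ℕ, Fin k => p.1) heq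
      exact congrArg (Sigma.mk j₁) (update_succ_inj _ hupd)
    · -- surjectivity
      rintro ⟨α, m⟩ hb hgne
      have hα : ∑ i, (i.1 + 1) * α i = n + 1 :=
        mem_partitions'.mp (Finset.mem_sigma.mp hb).1
      have hαm : α m ≠ 0 := by
        intro h0
        apply hgne
        simp [hg, h0]
      have hmn : m.1 ≤ n := by
        have h1 : (m.1 + 1) * α m ≤ n + 1 := hα ▸
          Finset.single_le_sum (f := fun j : Fin k => (j.1 + 1) * α j)
            (fun _ _ => Nat.zero_le _) (Finset.mem_univ m)
        nlinarith [Nat.one_le_iff_ne_zero.mpr hαm]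
      set j : Fin (n + 1) := ⟨n - m.1, by omega⟩ with hjdef
      set β : Fin k → ℕ := Function.update α m (α m - 1) with hβdef
      have hq' : n - j.1 < k := by
        have : n - j.1 = m.1 := by simp only [hjdef]; omega
        rw [this]; exact m.isLt
      have hmemβ : β ∈ partitions k j.1 := by
        refine mem_partitions'.mpr ?_
        have h2 := sum_weight_update_pred α m hαm
        rw [← hβdef] at h2
        show _ = n - m.1
        omega
      have hmemp : (⟨j, β⟩ : Σ _ : Fin (n + 1), Fin k → ℕ) ∈
          ((Finset.univ : Finset (Fin (n + 1))).sigma fun j => partitions k j.1) :=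
        Finset.mem_sigma.mpr ⟨Finset.mem_univ _, hmemβ⟩
      have hm2 : (⟨n - j.1, hq'⟩ : Fin k) = m := by
        refine Fin.ext ?_
        show n - j.1 = m.1
        simp only [hjdef]
        omega
      have hkey : (⟨Function.update β ⟨n - j.1, hq'⟩ (β ⟨n - j.1, hq'⟩ + 1), ⟨n - j.1, hq'⟩⟩ :
          Σ _ : Fin k → ℕ, Fin k) = ⟨α, m⟩ := by
        rw [hm2]
        congr 1
        funext i
        by_cases hi : i = m
        · subst hi
          rw [Function.update_self, hβdef, Function.update_self]
          omega
        · rw [Function.update_of_ne hi, hβdef, Function.update_of_ne hi]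
      have hfne : f ⟨j, β⟩ ≠ 0 := by
        rw [hval j β hmemβ hq', hkey]
        exact hgne
      exact ⟨⟨j, β⟩, hmemp, hfne, hkey⟩
    · -- value equation
      rintro ⟨j, β⟩ h₁ h₂
      exact hval j β ((Finset.mem_sigma.mp h₁).2) (hlt ⟨j, β⟩ h₂)
  calc (C ((n : ℚ) + 1) : MvPolynomial (Fin k) ℚ) * Fq k q (n + 1)
      = ∑ α ∈ partitions k (n + 1), ∑ m : Fin k, g ⟨α, m⟩ := by
        rw [Fq_eq_sum, Finset.mul_sum]
        refine Finset.sum_congr rfl fun α hα => ?_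
        have hαs : ∑ i : Fin k, (i.1 + 1) * α i = n + 1 := mem_partitions'.mp hα
        have key : ∑ m : Fin k, g ⟨α, m⟩
            = C (∑ m : Fin k, ((((m.1 + 1 : ℕ) : ℚ)) * q + ((n - m.1 : ℕ) : ℚ)) *
                (B q ((∑ i, α i) - 1) * (α m : ℚ) / ∏ i, ((α i).factorial : ℚ))) *
              ∏ i, X i ^ α i := by
          rw [map_sum, Finset.sum_mul]
          exact Finset.sum_congr rfl fun m _ => by rw [hg, C_mul]; ring
        have scal : ∑ m : Fin k, ((((m.1 + 1 : ℕ) : ℚ)) * q + ((n - m.1 : ℕ) : ℚ)) *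
                (B q ((∑ i, α i) - 1) * (α m : ℚ) / ∏ i, ((α i).factorial : ℚ))
            = ((n : ℚ) + 1) * (B q (∑ i, α i) / ∏ i, ((α i).factorial : ℚ)) := by
          simp_rw [← mul_div_assoc]
          rw [← Finset.sum_div, inner_sum' n q α hαs, mul_div_assoc]
        rw [key, scal, C_mul, mul_assoc]
    _ = ∑ p ∈ ((partitions k (n + 1)).sigma fun _ => (Finset.univ : Finset (Fin k))), g p :=
        (Finset.sum_sigma _ _ _).symm
    _ = ∑ p ∈ ((Finset.univ : Finset (Fin (n + 1))).sigma fun j => partitions k j.1), f p :=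
        main.symm
    _ = ∑ j : Fin (n + 1), ∑ β ∈ partitions k j.1, f ⟨j, β⟩ := Finset.sum_sigma _ _ _
    _ = ∑ j : Fin (n + 1),
        C (((n - j.1 + 1 : ℕ) : ℚ) * q + (j.1 : ℚ)) * tQ k (n - j.1) * Fq k q j.1 := by
        refine Finset.sum_congr rfl fun j _ => ?_
        rw [Fq_eq_sum, Finset.mul_sum]

noncomputable def entM (k : ℕ) (q : ℚ) (i j : ℕ) : MvPolynomial (Fin k) ℚ :=
  if j ≤ i then
    C ((((i - j + 1 : ℕ) : ℚ) * q + (j : ℚ)) / ((i : ℚ) + 1)) * tQ k (i - j)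
  else if j = i + 1 then -1
  else 0

lemma Mminus_apply (k n : ℕ) (q : ℚ) (i j : Fin n) :
    Mminus k n q i j = entM k q i.1 j.1 := rfl

lemma succAbove_val {n : ℕ} (j : Fin (n + 1)) (c : Fin n) :
    (j.succAbove c).1 = if c.1 < j.1 then c.1 else c.1 + 1 := by
  rw [Fin.succAbove]
  by_cases h : c.castSucc < j
  · rw [if_pos h, if_pos (by exact_mod_cast h)]
    rfl
  · rw [if_neg h, if_neg (by simpa [Fin.lt_def] using h)]
    rfl

lemma det_Mminus_rec (k n : ℕ) (q : ℚ) :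
    (Mminus k (n + 1) q).det =
      ∑ j : Fin (n + 1), (Mminus k (n + 1) q) (Fin.last n) j * (Mminus k j.1 q).det := by
  rw [Matrix.det_succ_row _ (Fin.last n)]
  refine Finset.sum_congr rfl fun j _ => ?_
  have hj : j.1 ≤ n := Nat.lt_succ_iff.mp j.isLt
  have hminor : ((Mminus k (n + 1) q).submatrix (Fin.last n).succAbove j.succAbove).det
      = (-1 : MvPolynomial (Fin k) ℚ) ^ (n - j.1) * (Mminus k j.1 q).det := by
    set E : Fin j.1 ⊕ Fin (n - j.1) ≃ Fin n :=
      finSumFinEquiv.trans (finCongr (by omega)) with hE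
    rw [← Matrix.det_submatrix_equiv_self E]
    have hEl : ∀ x : Fin j.1, (E (Sum.inl x)).1 = x.1 := fun x => by
      simp [hE]
    have hEr : ∀ d : Fin (n - j.1), (E (Sum.inr d)).1 = j.1 + d.1 := fun d => by
      simp [hE]
    have hrow : ∀ z : Fin n, ((Fin.last n).succAbove z).1 = z.1 := fun z => by
      rw [Fin.succAbove_last]
      rfl
    set D : Matrix (Fin (n - j.1)) (Fin (n - j.1)) (MvPolynomial (Fin k) ℚ) :=
      Matrix.of fun d d' => entM k q (j.1 + d.1) (j.1 + d'.1 + 1) with hD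
    set Cb : Matrix (Fin (n - j.1)) (Fin j.1) (MvPolynomial (Fin k) ℚ) :=
      Matrix.of fun d x => entM k q (j.1 + d.1) x.1 with hCb
    have hblocks :
        (((Mminus k (n + 1) q).submatrix (Fin.last n).succAbove j.succAbove).submatrix E E)
          = Matrix.fromBlocks (Mminus k j.1 q) 0 Cb D := by
      refine Matrix.ext fun r c => ?_
      rcases r with x | d <;> rcases c with y | d' <;>
        simp only [Matrix.submatrix_apply, Matrix.fromBlocks_apply₁₁,
          Matrix.fromBlocks_apply₁₂, Matrix.fromBlocks_apply₂₁, Matrix.fromBlocks_apply₂₂,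
          Mminus_apply]
      · -- A block
        rw [hrow, hEl]
        have hcol : (j.succAbove (E (Sum.inl y))).1 = y.1 := by
          rw [succAbove_val, hEl, if_pos y.isLt]
        rw [hcol]
      · -- B block = 0
        rw [hrow, hEl]
        have hcol : (j.succAbove (E (Sum.inr d'))).1 = j.1 + d'.1 + 1 := by
          rw [succAbove_val, hEr, if_neg (by omega)]
        rw [hcol, entM, if_neg (by omega), if_neg (by omega)]
        simp
      · -- C block
        rw [hrow, hEr]
        have hcol : (j.succAbove (E (Sum.inl y))).1 = y.1 := by
          rw [succAbove_val, hEl, if_pos y.isLt]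
        rw [hcol]
        rfl
      · -- D block
        rw [hrow, hEr]
        have hcol : (j.succAbove (E (Sum.inr d'))).1 = j.1 + d'.1 + 1 := by
          rw [succAbove_val, hEr, if_neg (by omega)]
        rw [hcol]
        rfl
    rw [hblocks, Matrix.det_fromBlocks_zero₁₂]
    have hDtri : D.BlockTriangular OrderDual.toDual := by
      intro a b hab
      have hab' : a < b := hab
      rw [hD]
      show entM k q (j.1 + a.1) (j.1 + b.1 + 1) = 0
      rw [entM, if_neg (by omega; ), if_neg (by have := Fin.lt_def.mp hab'; omega)]
    have hDdet : D.det = (-1 : MvPolynomial (Fin k) ℚ) ^ (n - j.1) := by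
      rw [Matrix.det_of_lowerTriangular D hDtri]
      have : ∀ d : Fin (n - j.1), D d d = -1 := fun d => by
        rw [hD]
        show entM k q (j.1 + d.1) (j.1 + d.1 + 1) = -1
        rw [entM, if_neg (by omega), if_pos rfl]
      rw [Finset.prod_congr rfl fun d _ => this d]
      simp
    rw [hDdet]
    ring
  rw [hminor, Fin.val_last]
  have hpow : ((-1 : MvPolynomial (Fin k) ℚ) ^ (n + j.1)) * (-1) ^ (n - j.1) = 1 := by
    rw [← pow_add]
    have h2 : (n + j.1) + (n - j.1) = 2 * n := by omega
    rw [h2, pow_mul]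
    simp
  linear_combination ((Mminus k (n + 1) q) (Fin.last n) j * (Mminus k j.1 q).det) * hpow

lemma Mminus_last (k m : ℕ) (q : ℚ) (j : Fin (m + 1)) :
    Mminus k (m + 1) q (Fin.last m) j =
      C ((((m - j.1 + 1 : ℕ) : ℚ) * q + (j.1 : ℚ)) / ((m : ℚ) + 1)) * tQ k (m - j.1) := by
  have hj : j.1 ≤ m := Nat.lt_succ_iff.mp j.isLt
  simp only [Mminus, Fin.val_last]
  rw [if_pos hj]

lemma Fq_rec (k n : ℕ) (q : ℚ) :
    Fq k q (n + 1) = ∑ j : Fin (n + 1),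
      C ((((n - j.1 + 1 : ℕ) : ℚ) * q + (j.1 : ℚ)) / ((n : ℚ) + 1)) * tQ k (n - j.1) *
        Fq k q j.1 := by
  have hne : ((n : ℚ) + 1) ≠ 0 := by positivity
  have hstart : Fq k q (n + 1) = C (((n : ℚ) + 1)⁻¹) * (C ((n : ℚ) + 1) * Fq k q (n + 1)) := by
    rw [← mul_assoc, ← C_mul, inv_mul_cancel₀ hne, C_1, one_mul]
  rw [hstart, Fq_rec_scaled, Finset.mul_sum]
  refine Finset.sum_congr rfl fun j _ => ?_
  rw [← mul_assoc, ← mul_assoc, ← C_mul]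
  congr 3
  field_simp

theorem det_Mminus_eq_Fq (k n : ℕ) (hk : 1 ≤ k) (hn : 1 ≤ n) (q : ℚ) :
    (Mminus k n q).det = Fq k q n := by
  suffices H : ∀ m, (Mminus k m q).det = Fq k q m from H n
  intro m
  induction m using Nat.strong_induction_on with
  | _ m ih =>
    rcases m with _ | m
    · rw [Fq]
      simp [Matrix.det_fin_zero]
    · rw [det_Mminus_rec, Fq_rec]
      refine Finset.sum_congr rfl fun j _ => ?_
      rw [ih j.1 j.isLt, Mminus_last]
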